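/- arXiv:2108.11152 — 2 statements merged into one kernel-verified Lean document; each statement's English description precedes it below -/
import Mathlib

section
/- Let $f$ be a slowly oscillating function on $\mathbb{R}^d$ with values in a Banach space $X$. If $f$ is slowly oscillating, i.e., for every compact $M$, $\sup_{m\in M}\|f(x+m)-f(x)\|_X \to 0$ as $|x|\to\infty$, and in addition $f$ is smooth with bounded derivatives, then $\lim_{|x|\to\infty} \partial_k f(x) = 0$ for each $k = 1,\dots,d$. -/
open Filter Topology

/-- If `f` is smooth with all derivatives bounded and slowly oscillating, then all
first-order partial derivatives tend to `0` at infinity. -/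
theorem stmt1 {d : ℕ} {X : Type*} [NormedAddCommGroup X] [NormedSpace ℝ X]
    (f : EuclideanSpace ℝ (Fin d) → X)
    (hf : ContDiff ℝ (⊤ : ℕ∞) f)
    (hbd : ∀ n : ℕ, ∃ C : ℝ, ∀ x, ‖iteratedFDeriv ℝ n f x‖ ≤ C)
    (hso : ∀ M : Set (EuclideanSpace ℝ (Fin d)), IsCompact M → ∀ ε > 0, ∃ R : ℝ,
      ∀ x, R ≤ ‖x‖ → ∀ m ∈ M, ‖f (x + m) - f x‖ < ε) :
    ∀ k : Fin d,
      Tendsto (fun x => fderiv ℝ f x (EuclideanSpace.single k 1)) (cocompact _) (𝓝 0) := by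
  intro k
  obtain ⟨C, hC⟩ := hbd 2
  set C2 : ℝ := max C 0 with hC2def
  have hC2nonneg : 0 ≤ C2 := le_max_right _ _
  -- The derivative map is Lipschitz with constant C2
  have hdf : Differentiable ℝ f := hf.differentiable (by simp)
  have hdf' : ContDiff ℝ (⊤ : ℕ∞) (fun y => fderiv ℝ f y) := hf.fderiv_right (by simp)
  have hdf'diff : Differentiable ℝ (fun y => fderiv ℝ f y) := hdf'.differentiable (by simp)
  have hnorm2 : ∀ y, ‖fderiv ℝ (fun z => fderiv ℝ f z) y‖ ≤ C2 := by
    intro y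
    have h1 : ‖iteratedFDeriv ℝ 0 (fderiv ℝ (fun z => fderiv ℝ f z)) y‖
        = ‖iteratedFDeriv ℝ 1 (fun z => fderiv ℝ f z) y‖ :=
      norm_iteratedFDeriv_fderiv (n := 0)
    have h2 : ‖iteratedFDeriv ℝ 1 (fun z => fderiv ℝ f z) y‖
        = ‖iteratedFDeriv ℝ 2 f y‖ := norm_iteratedFDeriv_fderiv (n := 1)
    have h0 : ‖iteratedFDeriv ℝ 0 (fderiv ℝ (fun z => fderiv ℝ f z)) y‖
        = ‖fderiv ℝ (fun z => fderiv ℝ f z) y‖ := norm_iteratedFDeriv_zero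
    rw [← h0, h1, h2]
    exact (hC y).trans (le_max_left _ _)
  have hlip : ∀ x y : EuclideanSpace ℝ (Fin d),
      ‖fderiv ℝ f y - fderiv ℝ f x‖ ≤ C2 * ‖y - x‖ := by
    intro x y
    exact convex_univ.norm_image_sub_le_of_norm_fderiv_le
      (fun z _ => hdf'diff z) (fun z _ => hnorm2 z) (Set.mem_univ x) (Set.mem_univ y)
  rw [Metric.tendsto_nhds]
  intro ε hε
  set e : EuclideanSpace ℝ (Fin d) := EuclideanSpace.single k 1 with he
  have hne : ‖e‖ = 1 := by simp [he, EuclideanSpace.norm_single]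
  -- choose step size
  set t : ℝ := min (ε / (2 * (C2 + 1))) 1 with ht
  have htpos : 0 < t := lt_min (div_pos hε (by linarith)) one_pos
  have ht1 : t ≤ ε / (2 * (C2 + 1)) := min_le_left _ _
  have hC2t : C2 * t ≤ ε / 2 := by
    have : t * (2 * (C2 + 1)) ≤ ε := by
      rw [← le_div_iff₀ (by linarith)] at *
      exact ht1
    nlinarith
  obtain ⟨R, hR⟩ := hso {t • e} isCompact_singleton (ε * t / 2) (by positivity)
  refine Filter.mem_of_superset
    (Filter.mem_cocompact.2 ⟨Metric.closedBall 0 R, isCompact_closedBall 0 R, subset_rfl⟩) ?_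
  intro x hx
  simp only [Metric.mem_closedBall, Set.mem_compl_iff, dist_zero_right, not_le] at hx
  have hxR : R ≤ ‖x‖ := hx.le
  have hosc : ‖f (x + t • e) - f x‖ < ε * t / 2 := hR x hxR _ rfl
  -- Taylor estimate on the closed ball
  have hkey : ‖f (x + t • e) - f x - (fderiv ℝ f x) (x + t • e - x)‖ ≤ C2 * t * ‖x + t • e - x‖ := by
    refine (convex_closedBall x t).norm_image_sub_le_of_norm_fderiv_le'
      (fun z _ => hdf z) (fun z hz => ?_) (Metric.mem_closedBall_self htpos.le) ?_
    · calc ‖fderiv ℝ f z - fderiv ℝ f x‖ ≤ C2 * ‖z - x‖ := hlip x z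
        _ ≤ C2 * t := by
          apply mul_le_mul_of_nonneg_left _ hC2nonneg
          rwa [← dist_eq_norm, ← Metric.mem_closedBall]
    · simp [Metric.mem_closedBall, dist_eq_norm, norm_smul, hne, abs_of_pos htpos]
  have hsub : ‖x + t • e - x‖ = t := by
    simp [norm_smul, hne, abs_of_pos htpos]
  rw [hsub] at hkey
  have happ : (fderiv ℝ f x) (x + t • e - x) = t • (fderiv ℝ f x) e := by
    rw [add_sub_cancel_left, map_smul]
  rw [happ] at hkey
  have hval : t * ‖(fderiv ℝ f x) e‖ ≤ ‖f (x + t • e) - f x‖ + C2 * t * t := by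
    have h := norm_sub_norm_le (t • (fderiv ℝ f x) e) (f (x + t • e) - f x)
    rw [norm_smul, Real.norm_eq_abs, abs_of_pos htpos] at h
    linarith [hkey, h, norm_sub_rev (f x) (f (x + t • e)),
      norm_sub_rev (t • (fderiv ℝ f x) e) (f (x + t • e) - f x)]
  have hfinal : t * ‖(fderiv ℝ f x) e‖ < ε * t := by
    calc t * ‖(fderiv ℝ f x) e‖ ≤ ‖f (x + t • e) - f x‖ + C2 * t * t := hval
      _ < ε * t / 2 + (ε / 2) * t := by
          have : C2 * t * t ≤ (ε / 2) * t :=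
            mul_le_mul_of_nonneg_right hC2t htpos.le
          linarith
      _ = ε * t := by ring
  simp only [dist_zero_right]
  have := (mul_lt_mul_iff_right₀ htpos).1 (by linarith [hfinal] : t * ‖(fderiv ℝ f x) e‖ < t * ε)
  simpa [he] using this
end

section
/- Let $f: \mathbb{R}^d \to X$ be a slowly oscillating function (valued in a Banach space $X$) and let $(x_n)$ be a sequence in $\mathbb{R}^d$ with $|x_n| \to \infty$. If the pointwise limit $g(x) = \lim_{n\to\infty} f(x + x_n)$ exists for every $x \in \mathbb{R}^d$, then $g$ is a constant function. -/
open Filter Topology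

/-- Pointwise limits of translates of a slowly oscillating function along a sequence
going to infinity are constant. -/
theorem stmt2 {d : ℕ} {X : Type*} [NormedAddCommGroup X]
    (f : EuclideanSpace ℝ (Fin d) → X)
    (hso : ∀ M : Set (EuclideanSpace ℝ (Fin d)), IsCompact M → ∀ ε > 0, ∃ R : ℝ,
      ∀ x, R ≤ ‖x‖ → ∀ m ∈ M, ‖f (x + m) - f x‖ < ε)
    (x : ℕ → EuclideanSpace ℝ (Fin d))
    (hx : Tendsto (fun n => ‖x n‖) atTop atTop)
    (g : EuclideanSpace ℝ (Fin d) → X)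
    (hg : ∀ v, Tendsto (fun n => f (v + x n)) atTop (𝓝 (g v))) :
    ∀ v w, g v = g w := by
  intro v w
  have hdiff : Tendsto (fun n => f (v + x n) - f (w + x n)) atTop (𝓝 (g v - g w)) :=
    (hg v).sub (hg w)
  have hzero : Tendsto (fun n => f (v + x n) - f (w + x n)) atTop (𝓝 0) := by
    rw [NormedAddCommGroup.tendsto_nhds_zero]
    intro ε hε
    obtain ⟨R, hR⟩ := hso {v - w} isCompact_singleton ε hε
    have hlarge : ∀ᶠ n in atTop, R + ‖w‖ ≤ ‖x n‖ := hx.eventually_ge_atTop _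
    filter_upwards [hlarge] with n hn
    have hnorm : R ≤ ‖w + x n‖ := by
      have h2 : ‖x n‖ - ‖w‖ ≤ ‖w + x n‖ := by
        have h3 := norm_add_le (w + x n) (-w)
        have e : w + x n + -w = x n := by abel
        rw [e, norm_neg] at h3
        linarith
      linarith
    have := hR (w + x n) hnorm (v - w) rfl
    have heq : (w + x n) + (v - w) = v + x n := by abel
    rw [heq] at this
    exact this
  have : g v - g w = 0 := tendsto_nhds_unique hdiff hzero
  exact sub_eq_zero.mp this
end
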